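/- arXiv:2408.15975 — 3 statements merged into one kernel-verified Lean document; each statement's English description precedes it below -/
import Mathlib

section
/- For every x ∈ μ_{N/q} and every integer n with 0 ≤ n ≤ M, one has Σ_{η∈U(n)} θ̃(ηx) ∈ A(n+1). -/
open scoped Classical BigOperators

noncomputable section

namespace CycloMZV

/-- `mu n` is the set `μ_n` of `n`-th roots of unity in `ℂ`. -/
def mu (n : ℕ) : Set ℂ := {x : ℂ | x ^ n = 1}

variable (p M : ℕ) (ζ : ℂ)

/-- `ν_N = {ζ^m : m ≡ 1 (mod q)}` where `q = 6 - p`. -/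
def nu : Set ℂ := {x : ℂ | ∃ m : ℕ, m % (6 - p) = 1 ∧ x = ζ ^ m}

/-- `v x` is the `p`-adic valuation of (the least positive) `m` with `ζ ^ m = x`. -/
def vval (x : ℂ) : ℕ :=
  if h : ∃ m : ℕ, 0 < m ∧ ζ ^ m = x then padicValNat p (Nat.find h) else 0

/-- `Λ_c(x) = {ε ∈ ν_N : ε^(c·p^(v x)) = x}`. -/
def Lam (c : ℤ) (x : ℂ) : Set ℂ :=
  {ε : ℂ | ε ∈ nu p ζ ∧ ε ^ (c * (p : ℤ) ^ vval p ζ x) = x}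

/-- Index `(ε, l)` of a basis vector `⟦ε;l⟧_p`. -/
abbrev Idx : Type := ℂ × ℕ

/-- The ambient free `𝔽_p`-module with basis `⟦ε;l⟧_p`, `(ε, l) : ℂ × ℕ`;
the space `𝒲` is its submodule spanned by the `⟦ε;l⟧_p` with `ε ∈ ν_N`. -/
abbrev Wb (p : ℕ) := Idx →₀ ZMod p

/-- `θ(x)`. -/
def theta (x : ℂ) : Wb p :=
  if x = 1 then 0
  else ∑ᶠ c ∈ ({1, -1} : Set ℤ), ∑ᶠ ε ∈ Lam p ζ c x,
    Finsupp.single ((ε, 0) : Idx) (1 : ZMod p)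

/-- `θ̃(x)`. -/
def thetaT (x : ℂ) : Wb p :=
  if x = 1 then -∑ᶠ y ∈ mu (p ^ M), theta p ζ y else theta p ζ x

/-- The ambient free module with basis indexed by `d`-tuples; `𝒲^{⊗d}` is its
submodule spanned by the basis tensors with all `ε`'s in `ν_N`. -/
abbrev Wt (p d : ℕ) := (Fin d → Idx) →₀ ZMod p

/-- The weight-`k` part `(𝒲^{⊗d})_k`. -/
def WtPart (d k : ℕ) : Submodule (ZMod p) (Wt p d) :=
  Submodule.span (ZMod p)
    {w : Wt p d | ∃ a : Fin d → Idx, (∀ i, (a i).1 ∈ nu p ζ) ∧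
      d + ∑ i, (a i).2 = k ∧ w = Finsupp.single a 1}

/-- `𝒲_1^{⊗d}`: the span of the basis tensors `⟦ε_1,…,ε_d;0,…,0⟧_p` with `ε_i ∈ ν_N`. -/
def W1Part (d : ℕ) : Submodule (ZMod p) (Wt p d) :=
  Submodule.span (ZMod p)
    {w : Wt p d | ∃ a : Fin d → Idx, (∀ i, (a i).1 ∈ nu p ζ ∧ (a i).2 = 0) ∧
      w = Finsupp.single a 1}

/-- Delete the `i`-th entry (0-based) and append `b` at the end. -/
def moveL {d : ℕ} (i : ℕ) (a : Fin d → Idx) (b : Idx) : Fin d → Idx :=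
  fun j =>
    if h2 : (j : ℕ) + 1 < d then
      (if (j : ℕ) < i then a j else a ⟨(j : ℕ) + 1, h2⟩)
    else b

/-- Delete `ε_{i+1}` and `l_i` (0-based `i`) and append `b` at the end. -/
def moveR {d : ℕ} (i : ℕ) (a : Fin d → Idx) (b : Idx) : Fin d → Idx :=
  fun j =>
    if h2 : (j : ℕ) + 1 < d then
      (if (j : ℕ) < i then a j
       else if (j : ℕ) = i then ((a j).1, (a ⟨(j : ℕ) + 1, h2⟩).2)
       else a ⟨(j : ℕ) + 1, h2⟩)
    else b

/-- The second-to-last `l`-entry `l_{d-1}` (and `0` if `d ≤ 1`). -/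
def lprev {d : ℕ} (a : Fin d → Idx) : ℕ :=
  if h : 2 ≤ d then (a ⟨d - 2, by omega⟩).2 else 0

/-- The last `l`-entry `l_d` (and `0` if `d = 0`). -/
def llast {d : ℕ} (a : Fin d → Idx) : ℕ :=
  if h : 1 ≤ d then (a ⟨d - 1, by omega⟩).2 else 0

/-- Replace the last two `l`-entries by `s` and `r`. -/
def updEnd {d : ℕ} (a : Fin d → Idx) (s r : ℕ) : Fin d → Idx :=
  fun j =>
    if (j : ℕ) + 1 = d then ((a j).1, r)
    else if (j : ℕ) + 2 = d then ((a j).1, s)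
    else a j

/-- value of `𝓔_d` on the basis tensor indexed by `a`. -/
def Ebase (d : ℕ) (a : Fin d → Idx) : Wt p d :=
  (∑ i : Fin d,
    if h : (i : ℕ) + 1 < d then
      (if (a i).2 = 0 then
        Finsupp.mapDomain (moveL (i : ℕ) a)
          (theta p ζ ((a i).1 / (a ⟨(i : ℕ) + 1, h⟩).1))
        - Finsupp.mapDomain (moveR (i : ℕ) a)
          (theta p ζ ((a ⟨(i : ℕ) + 1, h⟩).1 / (a i).1))
      else 0)
    else 0)
  + ∑ r ∈ Finset.Icc (llast a) (lprev a + llast a),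
      ((-1 : ZMod p) ^ (r - llast a) * (r.choose (llast a) : ZMod p)) •
        Finsupp.single (updEnd a (lprev a + llast a - r) r) (1 : ZMod p)

/-- The map `𝓔_d`. -/
def Ecal (d : ℕ) : Module.End (ZMod p) (Wt p d) :=
  Finsupp.linearCombination (ZMod p) (Ebase p ζ d)

/-- value of `L̃_i` (0-based `i`) on the basis tensor indexed by `a`. -/
def LtilBase (d i : ℕ) (a : Fin d → Idx) : Wt p d :=
  if h : i + 1 < d then
    (if (a ⟨i, by omega⟩).2 = 0 then
      Finsupp.mapDomain (moveL i a)
        (thetaT p M ζ ((a ⟨i, by omega⟩).1 / (a ⟨i + 1, h⟩).1))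
    else 0)
  else 0

/-- `L̃_i` (with 0-based `i`, so the paper's `L̃_i` is `Ltil p M ζ d (i-1)`). -/
def Ltil (d i : ℕ) : Module.End (ZMod p) (Wt p d) :=
  Finsupp.linearCombination (ZMod p) (LtilBase p M ζ d i)

/-- value of `R̃_i` (0-based `i`) on the basis tensor indexed by `a`. -/
def RtilBase (d i : ℕ) (a : Fin d → Idx) : Wt p d :=
  if h : i + 1 < d then
    (if (a ⟨i, by omega⟩).2 = 0 then
      Finsupp.mapDomain (moveR i a)
        (thetaT p M ζ ((a ⟨i + 1, h⟩).1 / (a ⟨i, by omega⟩).1))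
    else 0)
  else 0

/-- `R̃_i` (with 0-based `i`, so the paper's `R̃_i` is `Rtil p M ζ d (i-1)`). -/
def Rtil (d i : ℕ) : Module.End (ZMod p) (Wt p d) :=
  Finsupp.linearCombination (ZMod p) (RtilBase p M ζ d i)

/-- value of `S` on the basis tensor indexed by `a`. -/
def Sbase (d : ℕ) (a : Fin d → Idx) : Wt p d :=
  ∑ r ∈ Finset.Icc (llast a + 1) (lprev a + llast a),
    ((-1 : ZMod p) ^ (r - llast a) * (r.choose (llast a) : ZMod p)) •
      Finsupp.single (updEnd a (lprev a + llast a - r) r) (1 : ZMod p)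

/-- The map `S`. -/
def Sop (d : ℕ) : Module.End (ZMod p) (Wt p d) :=
  Finsupp.linearCombination (ZMod p) (Sbase p d)

end CycloMZV
namespace CycloMZV

/-- The subspace `A(n) ⊆ 𝒲_1`. -/
def Apart (p M : ℕ) (ζ : ℂ) (n : ℕ) : Submodule (ZMod p) (Wb p) :=
  if n ≤ M then
    Submodule.span (ZMod p)
      {w : Wb p | ∃ ε ∈ nu p ζ,
        w = ∑ᶠ η ∈ mu (p ^ n), Finsupp.single ((η * ε, 0) : Idx) (1 : ZMod p)}
  else ⊥


section AuxProof

variable {p M e : ℕ} {ζ : ℂ}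

lemma one_mem_mu (n : ℕ) : (1 : ℂ) ∈ mu n := by simp [mu]

lemma mul_mem_mu {n : ℕ} {x y : ℂ} (hx : x ∈ mu n) (hy : y ∈ mu n) : x * y ∈ mu n := by
  simp only [mu, Set.mem_setOf_eq] at hx hy ⊢
  rw [mul_pow, hx, hy, one_mul]

lemma inv_mem_mu {n : ℕ} {x : ℂ} (hx : x ∈ mu n) : x⁻¹ ∈ mu n := by
  simp only [mu, Set.mem_setOf_eq] at hx ⊢
  rw [inv_pow, hx, inv_one]

lemma mu_mono {a b : ℕ} (h : a ∣ b) : mu a ⊆ mu b := by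
  intro x hx
  obtain ⟨c, rfl⟩ := h
  simp only [mu, Set.mem_setOf_eq] at hx ⊢
  rw [pow_mul, hx, one_pow]

lemma ne_zero_of_mem_mu {n : ℕ} {x : ℂ} (hn : n ≠ 0) (hx : x ∈ mu n) : x ≠ 0 := by
  rintro rfl
  simp only [mu, Set.mem_setOf_eq, zero_pow hn] at hx
  exact zero_ne_one hx

lemma pow_eq_pow_iff (hp2 : 2 ≤ p) (hζ : IsPrimitiveRoot ζ (p ^ (M + e)))
    {a b : ℕ} : ζ ^ a = ζ ^ b ↔ a ≡ b [MOD p ^ (M + e)] := by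
  have hz : ζ ≠ 0 := hζ.ne_zero (pow_ne_zero _ (by omega))
  have main : ∀ a b : ℕ, a ≤ b → (ζ ^ a = ζ ^ b ↔ a ≡ b [MOD p ^ (M + e)]) := by
    intro a b hab
    constructor
    · intro h
      have h2 : ζ ^ a * ζ ^ (b - a) = ζ ^ a * 1 := by
        rw [mul_one, ← pow_add, show a + (b - a) = b by omega]
        exact h.symm
      have h3 := mul_left_cancel₀ (pow_ne_zero a hz) h2
      exact (Nat.modEq_iff_dvd' hab).mpr ((hζ.pow_eq_one_iff_dvd _).mp h3)
    · intro h
      have h3 : ζ ^ (b - a) = 1 :=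
        (hζ.pow_eq_one_iff_dvd _).mpr ((Nat.modEq_iff_dvd' hab).mp h)
      calc ζ ^ a = ζ ^ a * ζ ^ (b - a) := by rw [h3, mul_one]
        _ = ζ ^ b := by rw [← pow_add]; congr 1; omega
  rcases le_total a b with h | h
  · exact main a b h
  · exact ⟨fun h' => ((main b a h).mp h'.symm).symm, fun h' => ((main b a h).mpr h'.symm).symm⟩

/-- finset version of `mu (p ^ k)`. -/
def Tf (p M e : ℕ) (ζ : ℂ) (k : ℕ) : Finset ℂ :=
  (Finset.range (p ^ k)).image fun j => ζ ^ (p ^ (M + e - k) * j)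

/-- finset version of `nu p ζ`. -/
def Nf (p M e : ℕ) (ζ : ℂ) : Finset ℂ :=
  (Finset.range (p ^ M)).image fun j => ζ ^ (1 + p ^ e * j)

lemma coe_Tf (hp2 : 2 ≤ p) (hζ : IsPrimitiveRoot ζ (p ^ (M + e))) {k : ℕ} (hk : k ≤ M + e) :
    ↑(Tf p M e ζ k) = mu (p ^ k) := by
  have hppos : 0 < p := by omega
  ext x
  simp only [Tf, Finset.coe_image, Finset.coe_range, Set.mem_image, Set.mem_Iio, mu,
    Set.mem_setOf_eq]
  constructor
  · rintro ⟨j, hj, rfl⟩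
    rw [← pow_mul, show p ^ (M + e - k) * j * p ^ k = p ^ (M + e) * j by
      rw [mul_right_comm, ← pow_add, Nat.sub_add_cancel hk], pow_mul, hζ.pow_eq_one, one_pow]
  · intro hx
    have hxV : x ^ p ^ (M + e) = 1 := by
      rw [show M + e = k + (M + e - k) by omega, pow_add, pow_mul, hx, one_pow]
    haveI : NeZero (p ^ (M + e)) := ⟨pow_ne_zero _ (by omega)⟩
    obtain ⟨i, hi, rfl⟩ := hζ.eq_pow_of_pow_eq_one hxV
    have h1 : ζ ^ (i * p ^ k) = 1 := by rw [pow_mul]; exact hx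
    have h2 : p ^ (M + e) ∣ i * p ^ k := (hζ.pow_eq_one_iff_dvd _).mp h1
    obtain ⟨c, hc⟩ := h2
    have h3 : i = p ^ (M + e - k) * c := by
      apply Nat.eq_of_mul_eq_mul_right (pow_pos hppos k)
      rw [hc, mul_right_comm, ← pow_add, Nat.sub_add_cancel hk]
    refine ⟨c % p ^ k, Nat.mod_lt _ (pow_pos hppos k), ?_⟩
    rw [pow_eq_pow_iff hp2 hζ, h3]
    have h4 := Nat.ModEq.mul_left' (c := p ^ (M + e - k)) (Nat.mod_modEq c (p ^ k))
    rwa [← pow_add, Nat.sub_add_cancel hk] at h4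

lemma coe_Nf (hp2 : 2 ≤ p) (he : 1 ≤ e) (hq : 6 - p = p ^ e)
    (hζ : IsPrimitiveRoot ζ (p ^ (M + e))) : ↑(Nf p M e ζ) = nu p ζ := by
  have hpe : 2 ≤ p ^ e := le_trans hp2 (Nat.le_self_pow (by omega) p)
  ext x
  simp only [Nf, Finset.coe_image, Finset.coe_range, Set.mem_image, Set.mem_Iio, nu,
    Set.mem_setOf_eq]
  constructor
  · rintro ⟨j, hj, rfl⟩
    refine ⟨1 + p ^ e * j, ?_, rfl⟩
    rw [hq, Nat.add_mul_mod_self_left, Nat.mod_eq_of_lt (by omega)]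
  · rintro ⟨m, hm, rfl⟩
    rw [hq] at hm
    have hm'1 : m % p ^ (M + e) % p ^ e = 1 := by
      rw [Nat.mod_mod_of_dvd _ (pow_dvd_pow p (by omega : e ≤ M + e))]; exact hm
    refine ⟨m % p ^ (M + e) / p ^ e, ?_, ?_⟩
    · rw [Nat.div_lt_iff_lt_mul (by omega : 0 < p ^ e), ← pow_add, Nat.add_comm M e,
        Nat.add_comm e M]
      exact Nat.mod_lt _ (pow_pos (by omega) _)
    · rw [pow_eq_pow_iff hp2 hζ]
      have hrec : 1 + p ^ e * (m % p ^ (M + e) / p ^ e) = m % p ^ (M + e) := by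
        conv_rhs => rw [← Nat.mod_add_div' (m % p ^ (M + e)) (p ^ e)]
        rw [hm'1]
        ring
      rw [hrec]
      exact Nat.mod_modEq m _

lemma dvd_of_modEq {n k x y : ℕ} (hk : k ∣ n) (h : x ≡ y [MOD n]) (hx : k ∣ x) : k ∣ y :=
  Nat.modEq_zero_iff_dvd.mp ((h.of_dvd hk).symm.trans (Nat.modEq_zero_iff_dvd.mpr hx))

lemma padic_congr (hp : p.Prime) {V a b : ℕ} (ha : 0 < a) (hb : 0 < b)
    (hmod : a ≡ b [MOD p ^ V]) (hnd : ¬p ^ V ∣ a) :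
    padicValNat p a = padicValNat p b := by
  haveI : Fact p.Prime := ⟨hp⟩
  have hv : padicValNat p a < V := by
    by_contra h
    exact hnd ((pow_dvd_pow p (le_of_not_gt h)).trans pow_padicValNat_dvd)
  apply le_antisymm
  · exact (padicValNat_dvd_iff_le hb.ne').mp
      (dvd_of_modEq (pow_dvd_pow p hv.le) hmod pow_padicValNat_dvd)
  · by_contra h
    push_neg at h
    have h1 : p ^ (padicValNat p a + 1) ∣ b := (padicValNat_dvd_iff_le hb.ne').mpr h
    have h2 : p ^ (padicValNat p a + 1) ∣ a :=
      dvd_of_modEq (pow_dvd_pow p hv) hmod.symm h1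
    have h3 := (padicValNat_dvd_iff_le ha.ne').mp h2
    omega

lemma vval_pow (hp : p.Prime) (hζ : IsPrimitiveRoot ζ (p ^ (M + e)))
    {m : ℕ} (hm : 0 < m) (hnd : ¬p ^ (M + e) ∣ m) :
    vval p ζ (ζ ^ m) = padicValNat p m := by
  have hex : ∃ k, 0 < k ∧ ζ ^ k = ζ ^ m := ⟨m, hm, rfl⟩
  unfold vval
  rw [dif_pos hex]
  obtain ⟨h1, h2⟩ := Nat.find_spec hex
  have hmod := (pow_eq_pow_iff hp.two_le hζ).mp h2
  exact padic_congr hp h1 hm hmod (fun hd => hnd (dvd_of_modEq dvd_rfl hmod hd))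

lemma vval_lvl (hp : p.Prime) (he : 1 ≤ e) (hζ : IsPrimitiveRoot ζ (p ^ (M + e)))
    {t : ℕ} (ht1 : 1 ≤ t) (ht2 : t ≤ M + e)
    {y : ℂ} (hy : y ∈ mu (p ^ t)) (hy' : y ∉ mu (p ^ (t - 1))) :
    vval p ζ y = M + e - t := by
  haveI : Fact p.Prime := ⟨hp⟩
  have hp2 := hp.two_le
  have hy2 : y ∈ Tf p M e ζ t := by
    rw [← Finset.mem_coe, coe_Tf hp2 hζ ht2]; exact hy
  obtain ⟨j, hj, rfl⟩ := Finset.mem_image.mp hy2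
  have hpj : ¬ p ∣ j := by
    rintro ⟨j', rfl⟩
    apply hy'
    show (ζ ^ (p ^ (M + e - t) * (p * j'))) ^ p ^ (t - 1) = 1
    rw [← pow_mul, show p ^ (M + e - t) * (p * j') * p ^ (t - 1) = p ^ (M + e) * j' by
      rw [show p ^ (M + e) = p ^ (M + e - t) * p * p ^ (t - 1) by
        rw [← pow_succ, ← pow_add]; congr 1; omega]
      ring, pow_mul, hζ.pow_eq_one, one_pow]
  have hj0 : j ≠ 0 := fun h => hpj (h ▸ dvd_zero p)
  have hmpos : 0 < p ^ (M + e - t) * j :=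
    Nat.mul_pos (pow_pos (by omega) _) (Nat.pos_of_ne_zero hj0)
  have hnd : ¬ p ^ (M + e) ∣ p ^ (M + e - t) * j := by
    rintro ⟨c, hc⟩
    apply hpj
    have hj' : j = p ^ t * c := by
      apply Nat.eq_of_mul_eq_mul_left (pow_pos (by omega : 0 < p) (M + e - t))
      rw [hc, show p ^ (M + e) = p ^ (M + e - t) * p ^ t by
        rw [← pow_add, Nat.sub_add_cancel ht2], mul_assoc]
    rw [hj']
    exact Dvd.dvd.mul_right (dvd_pow_self p (by omega : t ≠ 0)) c
  rw [vval_pow hp hζ hmpos hnd, padicValNat.mul (pow_ne_zero _ (by omega)) hj0,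
    padicValNat.prime_pow, padicValNat.eq_zero_of_not_dvd hpj, add_zero]

lemma eps_pow_mem (hp2 : 2 ≤ p) (he : 1 ≤ e) (hζ : IsPrimitiveRoot ζ (p ^ (M + e)))
    {t : ℕ} (ht1 : 1 ≤ t) (ht2 : t ≤ M) {ε : ℂ} (hε : ε ∈ Nf p M e ζ) :
    ε ^ p ^ (M + e - t) ∈ mu (p ^ t) ∧ ε ^ p ^ (M + e - t) ∉ mu (p ^ (t - 1)) := by
  obtain ⟨j, hj, rfl⟩ := Finset.mem_image.mp hε
  constructor
  · show ((ζ ^ (1 + p ^ e * j)) ^ p ^ (M + e - t)) ^ p ^ t = 1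
    rw [← pow_mul, ← pow_mul]
    have hpow : p ^ (M + e - t) * p ^ t = p ^ (M + e) := by
      rw [← pow_add, Nat.sub_add_cancel (by omega : t ≤ M + e)]
    exact (hζ.pow_eq_one_iff_dvd _).mpr (Dvd.dvd.mul_left (hpow ▸ dvd_rfl) _)
  · intro hmem
    have h1 : ζ ^ ((1 + p ^ e * j) * p ^ (M + e - t) * p ^ (t - 1)) = 1 := by
      rw [pow_mul, pow_mul]; exact hmem
    have harith : (1 + p ^ e * j) * p ^ (M + e - t) * p ^ (t - 1)
        = (1 + p ^ e * j) * p ^ (M + e - 1) := by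
      rw [mul_assoc, ← pow_add]
      congr 2
      omega
    rw [harith] at h1
    obtain ⟨c, hc⟩ := (hζ.pow_eq_one_iff_dvd _).mp h1
    have h2 : 1 + p ^ e * j = p * c := by
      apply Nat.eq_of_mul_eq_mul_left (pow_pos (by omega : 0 < p) (M + e - 1))
      rw [mul_comm (p ^ (M + e - 1)), hc, show p ^ (M + e) = p ^ (M + e - 1) * p by
        rw [← pow_succ]; congr 1; omega]
      ring
    have h3 : p ∣ 1 + p ^ e * j := ⟨c, h2⟩
    rw [Nat.add_comm] at h3
    have h4 : p ∣ 1 := (Nat.dvd_add_right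
      (Dvd.dvd.mul_right (dvd_pow_self p (by omega : e ≠ 0)) j)).mp h3
    have := Nat.le_of_dvd one_pos h4
    omega

lemma Nf_stab (hp2 : 2 ≤ p) (hζ : IsPrimitiveRoot ζ (p ^ (M + e)))
    {η ε : ℂ} (hη : η ∈ mu (p ^ M)) (hε : ε ∈ Nf p M e ζ) :
    η * ε ∈ Nf p M e ζ := by
  have hη' : η ∈ Tf p M e ζ M := by
    rw [← Finset.mem_coe, coe_Tf hp2 hζ (by omega : M ≤ M + e)]; exact hη
  obtain ⟨i, hi, hie⟩ := Finset.mem_image.mp hη'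
  rw [show M + e - M = e by omega] at hie
  obtain ⟨j, hj, rfl⟩ := Finset.mem_image.mp hε
  rw [← hie, ← pow_add]
  apply Finset.mem_image.mpr
  refine ⟨(i + j) % p ^ M, Finset.mem_range.mpr (Nat.mod_lt _ (pow_pos (by omega) _)), ?_⟩
  rw [pow_eq_pow_iff hp2 hζ]
  have h1 : p ^ e * ((i + j) % p ^ M) ≡ p ^ e * (i + j) [MOD p ^ (M + e)] := by
    have h2 := Nat.ModEq.mul_left' (c := p ^ e) (Nat.mod_modEq (i + j) (p ^ M))
    rwa [← pow_add, Nat.add_comm e M] at h2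
  have h3 := h1.add_left 1
  have h4 : 1 + p ^ e * (i + j) = p ^ e * i + (1 + p ^ e * j) := by ring
  rw [h4] at h3
  exact h3

lemma theta_one_eq : theta p ζ 1 = 0 := by
  unfold theta
  rw [if_pos rfl]

lemma theta_eq (hp : p.Prime) (he : 1 ≤ e) (hq : 6 - p = p ^ e)
    (hζ : IsPrimitiveRoot ζ (p ^ (M + e))) {t : ℕ} (ht1 : 1 ≤ t) (ht2 : t ≤ M + e)
    {y : ℂ} (hy : y ∈ mu (p ^ t)) (hy' : y ∉ mu (p ^ (t - 1))) :
    theta p ζ y =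
      (∑ ε ∈ (Nf p M e ζ).filter (fun ε => ε ^ p ^ (M + e - t) = y),
        Finsupp.single ((ε, 0) : Idx) (1 : ZMod p)) +
      ∑ ε ∈ (Nf p M e ζ).filter (fun ε => (ε ^ p ^ (M + e - t))⁻¹ = y),
        Finsupp.single ((ε, 0) : Idx) (1 : ZMod p) := by
  have hy1 : y ≠ 1 := fun h => hy' (h ▸ one_mem_mu _)
  have hv : vval p ζ y = M + e - t := vval_lvl hp he hζ ht1 ht2 hy hy'
  have hcast : ((p : ℤ) ^ (M + e - t)) = ((p ^ (M + e - t) : ℕ) : ℤ) := by push_cast; ring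
  have hL1 : Lam p ζ 1 y
      = ↑((Nf p M e ζ).filter (fun ε => ε ^ p ^ (M + e - t) = y)) := by
    ext ε
    simp only [Lam, Set.mem_setOf_eq, hv, Finset.coe_filter, one_mul, hcast, zpow_natCast,
      ← coe_Nf hp.two_le he hq hζ, Finset.mem_coe]
  have hL2 : Lam p ζ (-1) y
      = ↑((Nf p M e ζ).filter (fun ε => (ε ^ p ^ (M + e - t))⁻¹ = y)) := by
    ext ε
    simp only [Lam, Set.mem_setOf_eq, hv, Finset.coe_filter, neg_one_mul, hcast, zpow_neg,
      zpow_natCast, ← coe_Nf hp.two_le he hq hζ, Finset.mem_coe]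
  unfold theta
  rw [if_neg hy1, finsum_mem_pair (by norm_num : (1 : ℤ) ≠ -1), hL1, hL2,
    finsum_mem_coe_finset, finsum_mem_coe_finset]

lemma gen_mem (hp2 : 2 ≤ p) (hζ : IsPrimitiveRoot ζ (p ^ (M + e)))
    {n : ℕ} (hn : n + 1 ≤ M) {ε0 : ℂ} (hε0 : ε0 ∈ nu p ζ) :
    (∑ η ∈ Tf p M e ζ (n + 1), Finsupp.single ((η * ε0, 0) : Idx) (1 : ZMod p))
      ∈ Apart p M ζ (n + 1) := by
  unfold Apart
  rw [if_pos hn]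
  apply Submodule.subset_span
  refine ⟨ε0, hε0, ?_⟩
  rw [show mu (p ^ (n + 1)) = ↑(Tf p M e ζ (n + 1)) from
    (coe_Tf hp2 hζ (by omega : n + 1 ≤ M + e)).symm, finsum_mem_coe_finset]

lemma stab_mem (hp : p.Prime) (he : 1 ≤ e) (hq : 6 - p = p ^ e)
    (hζ : IsPrimitiveRoot ζ (p ^ (M + e))) {n : ℕ} (hn : n + 1 ≤ M) :
    ∀ F : Finset ℂ, ↑F ⊆ nu p ζ →
      (∀ ε ∈ F, ∀ η ∈ mu (p ^ (n + 1)), η * ε ∈ F) →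
      (∑ ε ∈ F, Finsupp.single ((ε, 0) : Idx) (1 : ZMod p)) ∈ Apart p M ζ (n + 1) := by
  intro F
  induction F using Finset.strongInduction with
  | _ F ih =>
    intro hFnu hFstab
    rcases F.eq_empty_or_nonempty with rfl | ⟨ε0, hε0⟩
    · simp only [Finset.sum_empty]
      exact zero_mem _
    · have hε0nu : ε0 ∈ nu p ζ := hFnu hε0
      have hε0ne : ε0 ≠ 0 := by
        obtain ⟨m, -, rfl⟩ := hε0nu
        exact pow_ne_zero _ (hζ.ne_zero (pow_ne_zero _ (by have := hp.two_le; omega)))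
      have hcoeT := coe_Tf hp.two_le hζ (by omega : n + 1 ≤ M + e)
      set O : Finset ℂ := (Tf p M e ζ (n + 1)).image (· * ε0) with hO
      have hmemO : ∀ z, z ∈ O ↔ ∃ η ∈ mu (p ^ (n + 1)), η * ε0 = z := by
        intro z
        simp only [hO, Finset.mem_image]
        constructor
        · rintro ⟨η, hη, rfl⟩
          exact ⟨η, by rw [← hcoeT]; exact Finset.mem_coe.mpr hη, rfl⟩
        · rintro ⟨η, hη, rfl⟩
          exact ⟨η, Finset.mem_coe.mp (by rw [hcoeT]; exact hη), rfl⟩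
      have hOF : O ⊆ F := by
        intro z hz
        obtain ⟨η, hη, rfl⟩ := (hmemO z).mp hz
        exact hFstab ε0 hε0 η hη
      have hε0O : ε0 ∈ O := (hmemO ε0).mpr ⟨1, one_mem_mu _, one_mul ε0⟩
      have hsplit := Finset.sum_sdiff
        (f := fun ε => Finsupp.single ((ε, 0) : Idx) (1 : ZMod p)) hOF
      rw [← hsplit]
      apply add_mem
      · apply ih (F \ O) (Finset.sdiff_ssubset hOF ⟨ε0, hε0O⟩)
        · exact (Finset.coe_subset.mpr Finset.sdiff_subset).trans hFnu
        · intro ε hε η hη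
          rw [Finset.mem_sdiff] at hε ⊢
          refine ⟨hFstab ε hε.1 η hη, fun hmem => hε.2 ?_⟩
          obtain ⟨δ, hδ, hδe⟩ := (hmemO _).mp hmem
          apply (hmemO ε).mpr
          have hη0 : η ≠ 0 := ne_zero_of_mem_mu (pow_ne_zero _ (by have := hp.two_le; omega)) hη
          refine ⟨η⁻¹ * δ, mul_mem_mu (inv_mem_mu hη) hδ, ?_⟩
          rw [mul_assoc, hδe, ← mul_assoc, inv_mul_cancel₀ hη0, one_mul]
      · rw [hO, Finset.sum_image (by intro a _ b _ h; exact mul_right_cancel₀ hε0ne h)]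
        exact gen_mem hp.two_le hζ hn hε0nu

lemma level_sum_mem (hp : p.Prime) (he : 1 ≤ e) (hq : 6 - p = p ^ e)
    (hζ : IsPrimitiveRoot ζ (p ^ (M + e))) {n t : ℕ} (hn : n + 1 ≤ M)
    (ht1 : 1 ≤ t) (ht2 : t ≤ M) :
    (∑ y ∈ Tf p M e ζ t \ Tf p M e ζ (t - 1), theta p ζ y) ∈ Apart p M ζ (n + 1) := by
  have hp2 := hp.two_le
  have hcoet := coe_Tf hp2 hζ (by omega : t ≤ M + e)
  have hcoet1 := coe_Tf hp2 hζ (by omega : t - 1 ≤ M + e)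
  have hNstab : ∀ ε ∈ Nf p M e ζ, ∀ η ∈ mu (p ^ (n + 1)), η * ε ∈ Nf p M e ζ := by
    intro ε hε η hη
    exact Nf_stab hp2 hζ (mu_mono (pow_dvd_pow p hn) hη) hε
  have hNsub : ↑(Nf p M e ζ) ⊆ nu p ζ := by
    rw [coe_Nf hp2 he hq hζ]
  have hrw : ∀ y ∈ Tf p M e ζ t \ Tf p M e ζ (t - 1), theta p ζ y =
      (∑ ε ∈ (Nf p M e ζ).filter (fun ε => ε ^ p ^ (M + e - t) = y),
        Finsupp.single ((ε, 0) : Idx) (1 : ZMod p)) +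
      ∑ ε ∈ (Nf p M e ζ).filter (fun ε => (ε ^ p ^ (M + e - t))⁻¹ = y),
        Finsupp.single ((ε, 0) : Idx) (1 : ZMod p) := by
    intro y hy
    rw [Finset.mem_sdiff] at hy
    have hy1 : y ∈ mu (p ^ t) := by rw [← hcoet]; exact Finset.mem_coe.mpr hy.1
    have hy2 : y ∉ mu (p ^ (t - 1)) := fun hc => hy.2 (by
      rw [← Finset.mem_coe, hcoet1]; exact hc)
    exact theta_eq hp he hq hζ ht1 (by omega) hy1 hy2
  rw [Finset.sum_congr rfl hrw, Finset.sum_add_distrib]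
  have hmap1 : ∀ ε ∈ Nf p M e ζ, ε ^ p ^ (M + e - t) ∈ Tf p M e ζ t \ Tf p M e ζ (t - 1) := by
    intro ε hε
    obtain ⟨hm1, hm2⟩ := eps_pow_mem hp2 he hζ ht1 ht2 hε
    rw [Finset.mem_sdiff, ← Finset.mem_coe, ← Finset.mem_coe, hcoet, hcoet1]
    exact ⟨hm1, hm2⟩
  have hmap2 : ∀ ε ∈ Nf p M e ζ,
      (ε ^ p ^ (M + e - t))⁻¹ ∈ Tf p M e ζ t \ Tf p M e ζ (t - 1) := by
    intro ε hε
    obtain ⟨hm1, hm2⟩ := eps_pow_mem hp2 he hζ ht1 ht2 hε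
    rw [Finset.mem_sdiff, ← Finset.mem_coe, ← Finset.mem_coe, hcoet, hcoet1]
    refine ⟨inv_mem_mu hm1, fun hc => hm2 ?_⟩
    have := inv_mem_mu hc
    rwa [inv_inv] at this
  rw [Finset.sum_fiberwise_of_maps_to hmap1, Finset.sum_fiberwise_of_maps_to hmap2]
  exact add_mem (stab_mem hp he hq hζ hn _ hNsub hNstab)
    (stab_mem hp he hq hζ hn _ hNsub hNstab)

lemma Tf_subset (hp2 : 2 ≤ p) (hζ : IsPrimitiveRoot ζ (p ^ (M + e)))
    {k l : ℕ} (hkl : k ≤ l) (hl : l ≤ M + e) : Tf p M e ζ k ⊆ Tf p M e ζ l := by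
  rw [← Finset.coe_subset, coe_Tf hp2 hζ (by omega), coe_Tf hp2 hζ hl]
  exact mu_mono (pow_dvd_pow p hkl)

lemma sum_sdiff_decomp {α β : Type*} [DecidableEq α] [AddCommGroup β]
    {A B C : Finset α} (hAB : A ⊆ B) (hBC : B ⊆ C) (f : α → β) :
    ∑ x ∈ C \ A, f x = (∑ x ∈ C \ B, f x) + ∑ x ∈ B \ A, f x := by
  have h1 := Finset.sum_sdiff (f := f) hAB
  have h2 := Finset.sum_sdiff (f := f) hBC
  have h3 := Finset.sum_sdiff (f := f) (hAB.trans hBC)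
  have h4 : (∑ x ∈ C \ A, f x) + ∑ x ∈ A, f x
      = ((∑ x ∈ C \ B, f x) + ∑ x ∈ B \ A, f x) + ∑ x ∈ A, f x := by
    rw [h3, add_assoc, h1, h2]
  exact add_right_cancel h4

lemma diff_sum_mem (hp : p.Prime) (he : 1 ≤ e) (hq : 6 - p = p ^ e)
    (hζ : IsPrimitiveRoot ζ (p ^ (M + e))) {n : ℕ} :
    ∀ m, n ≤ m → m ≤ M →
      (∑ y ∈ Tf p M e ζ m \ Tf p M e ζ n, theta p ζ y) ∈ Apart p M ζ (n + 1) := by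
  intro m
  induction m with
  | zero =>
    intro h1 _
    have hn0 : n = 0 := by omega
    subst hn0
    rw [Finset.sdiff_self, Finset.sum_empty]
    exact zero_mem _
  | succ m ihm =>
    intro h1 h2
    rcases Nat.lt_or_ge n (m + 1) with hlt | hge
    · have hnm : n ≤ m := by omega
      rw [sum_sdiff_decomp (Tf_subset hp.two_le hζ hnm (by omega))
        (Tf_subset hp.two_le hζ (by omega : m ≤ m + 1) (by omega))]
      apply add_mem
      · have := level_sum_mem hp he hq hζ (n := n) (t := m + 1) (by omega) (by omega) h2
        rwa [show m + 1 - 1 = m by omega] at this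
      · exact ihm hnm (by omega)
    · have hnm : n = m + 1 := by omega
      subst hnm
      rw [Finset.sdiff_self, Finset.sum_empty]
      exact zero_mem _

theorem main_aux (p M e : ℕ) (ζ : ℂ) (hp : p.Prime) (he : 1 ≤ e)
    (hq : 6 - p = p ^ e) (hζ : IsPrimitiveRoot ζ (p ^ (M + e))) :
    ∀ x ∈ mu (p ^ M), ∀ n : ℕ, n ≤ M →
      (∑ᶠ η ∈ mu (p ^ n), thetaT p M ζ (η * x)) ∈ Apart p M ζ (n + 1) := by
  intro x hx n hn
  have hp2 := hp.two_le
  have hcoen := coe_Tf hp2 hζ (show n ≤ M + e by omega)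
  have hcoeM := coe_Tf hp2 hζ (show M ≤ M + e by omega)
  have hx0 : x ≠ 0 := ne_zero_of_mem_mu (pow_ne_zero _ (by omega)) hx
  rw [← hcoen, finsum_mem_coe_finset]
  by_cases hxn : x ∈ mu (p ^ n)
  · have hstep1 : ∑ η ∈ Tf p M e ζ n, thetaT p M ζ (η * x)
        = ∑ y ∈ Tf p M e ζ n, thetaT p M ζ y := by
      refine Finset.sum_nbij' (fun η => η * x) (fun y => y * x⁻¹) ?_ ?_ ?_ ?_ ?_
      · intro a ha
        show a * x ∈ Tf p M e ζ n
        rw [← Finset.mem_coe, hcoen] at ha ⊢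
        exact mul_mem_mu ha hxn
      · intro a ha
        show a * x⁻¹ ∈ Tf p M e ζ n
        rw [← Finset.mem_coe, hcoen] at ha ⊢
        exact mul_mem_mu ha (inv_mem_mu hxn)
      · intro a _
        show a * x * x⁻¹ = a
        rw [mul_assoc, mul_inv_cancel₀ hx0, mul_one]
      · intro a _
        show a * x⁻¹ * x = a
        rw [mul_assoc, inv_mul_cancel₀ hx0, mul_one]
      · intro a _
        rfl
    rw [hstep1]
    have h1n : (1 : ℂ) ∈ Tf p M e ζ n := by
      rw [← Finset.mem_coe, hcoen]; exact one_mem_mu _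
    have h1M : (1 : ℂ) ∈ Tf p M e ζ M := by
      rw [← Finset.mem_coe, hcoeM]; exact one_mem_mu _
    rw [← Finset.sum_erase_add _ _ h1n]
    have hT1 : thetaT p M ζ 1 = - ∑ y ∈ (Tf p M e ζ M).erase 1, theta p ζ y := by
      unfold thetaT
      rw [if_pos rfl, ← hcoeM, finsum_mem_coe_finset, ← Finset.sum_erase_add _ _ h1M,
        theta_one_eq, add_zero]
    have herase : ∀ y ∈ (Tf p M e ζ n).erase 1, thetaT p M ζ y = theta p ζ y := by
      intro y hy
      unfold thetaT
      rw [if_neg (Finset.ne_of_mem_erase hy)]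
    rw [Finset.sum_congr rfl herase, hT1]
    have hsub : (Tf p M e ζ n).erase 1 ⊆ (Tf p M e ζ M).erase 1 :=
      Finset.erase_subset_erase _ (Tf_subset hp2 hζ hn (by omega))
    have hdecomp := Finset.sum_sdiff (f := fun y => theta p ζ y) hsub
    have hsd : (Tf p M e ζ M).erase 1 \ (Tf p M e ζ n).erase 1
        = Tf p M e ζ M \ Tf p M e ζ n := by
      ext z
      simp only [Finset.mem_sdiff, Finset.mem_erase]
      constructor
      · rintro ⟨⟨hz1, hzM⟩, hz2⟩
        exact ⟨hzM, fun hzn => hz2 ⟨hz1, hzn⟩⟩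
      · rintro ⟨hzM, hzn⟩
        have hz1 : z ≠ 1 := fun h => hzn (h ▸ h1n)
        exact ⟨⟨hz1, hzM⟩, fun h => hzn h.2⟩
    rw [hsd] at hdecomp
    have hfinal : (∑ y ∈ (Tf p M e ζ n).erase 1, theta p ζ y)
        + (- ∑ y ∈ (Tf p M e ζ M).erase 1, theta p ζ y)
        = - ∑ y ∈ Tf p M e ζ M \ Tf p M e ζ n, theta p ζ y := by
      rw [← hdecomp]
      abel
    rw [hfinal]
    exact neg_mem (diff_sum_mem hp he hq hζ M hn le_rfl)
  · have hex : ∃ t, x ∈ mu (p ^ t) := ⟨M, hx⟩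
    set t := Nat.find hex with ht
    have hxt : x ∈ mu (p ^ t) := Nat.find_spec hex
    have htM : t ≤ M := Nat.find_min' hex hx
    have hnt : n + 1 ≤ t := by
      by_contra hcon
      push_neg at hcon
      exact hxn (mu_mono (pow_dvd_pow p (by omega)) hxt)
    have hxt' : x ∉ mu (p ^ (t - 1)) := Nat.find_min hex (by omega)
    have ht1 : 1 ≤ t := by omega
    have hnM : n + 1 ≤ M := by omega
    have hlvl : ∀ η ∈ Tf p M e ζ n, η * x ∈ mu (p ^ t) ∧ η * x ∉ mu (p ^ (t - 1)) := by
      intro η hη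
      rw [← Finset.mem_coe, hcoen] at hη
      have hη0 : η ≠ 0 := ne_zero_of_mem_mu (pow_ne_zero _ (by omega)) hη
      constructor
      · exact mul_mem_mu (mu_mono (pow_dvd_pow p (by omega)) hη) hxt
      · intro hc
        apply hxt'
        have hmm : η⁻¹ * (η * x) ∈ mu (p ^ (t - 1)) :=
          mul_mem_mu (inv_mem_mu (mu_mono (pow_dvd_pow p (by omega : n ≤ t - 1)) hη)) hc
        rwa [← mul_assoc, inv_mul_cancel₀ hη0, one_mul] at hmm
    have hrw : ∀ η ∈ Tf p M e ζ n, thetaT p M ζ (η * x) =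
        (∑ ε ∈ (Nf p M e ζ).filter (fun ε => ε ^ p ^ (M + e - t) = η * x),
          Finsupp.single ((ε, 0) : Idx) (1 : ZMod p)) +
        ∑ ε ∈ (Nf p M e ζ).filter (fun ε => (ε ^ p ^ (M + e - t))⁻¹ = η * x),
          Finsupp.single ((ε, 0) : Idx) (1 : ZMod p) := by
      intro η hη
      have h := hlvl η hη
      have hne1 : η * x ≠ 1 := fun hc => h.2 (hc ▸ one_mem_mu _)
      unfold thetaT
      rw [if_neg hne1]
      exact theta_eq hp he hq hζ ht1 (by omega) h.1 h.2
    rw [Finset.sum_congr rfl hrw, Finset.sum_add_distrib]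
    have hiff : ∀ a η : ℂ, (a = η * x) ↔ (a * x⁻¹ = η) := by
      intro a η
      constructor
      · intro h
        rw [h, mul_assoc, mul_inv_cancel₀ hx0, mul_one]
      · intro h
        rw [← h, mul_assoc, inv_mul_cancel₀ hx0, mul_one]
    have hNsub : ↑(Nf p M e ζ) ⊆ nu p ζ := by
      rw [coe_Nf hp2 he hq hζ]
    have hδpow : ∀ δ : ℂ, δ ∈ mu (p ^ (n + 1)) → δ ^ p ^ (M + e - t) ∈ mu (p ^ n) := by
      intro δ hδ
      have hδ' : δ ∈ mu (p ^ ((M + e - t) + n)) :=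
        mu_mono (pow_dvd_pow p (by omega)) hδ
      show (δ ^ p ^ (M + e - t)) ^ p ^ n = 1
      rw [← pow_mul, ← pow_add]
      exact hδ'
    apply add_mem
    · have hcond : ∀ η ∈ Tf p M e ζ n,
          (Nf p M e ζ).filter (fun ε => ε ^ p ^ (M + e - t) = η * x)
          = (Nf p M e ζ).filter (fun ε => ε ^ p ^ (M + e - t) * x⁻¹ = η) := by
        intro η _
        apply Finset.filter_congr
        intro ε _
        exact hiff _ _
      rw [Finset.sum_congr rfl (fun η hη => by rw [hcond η hη]),
        Finset.sum_fiberwise_eq_sum_filter]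
      apply stab_mem hp he hq hζ hnM
      · intro z hz
        rw [Finset.mem_coe, Finset.mem_filter] at hz
        exact hNsub (Finset.mem_coe.mpr hz.1)
      · intro ε hε δ hδ
        rw [Finset.mem_filter] at hε ⊢
        refine ⟨Nf_stab hp2 hζ (mu_mono (pow_dvd_pow p hnM) hδ) hε.1, ?_⟩
        have h2 := hε.2
        rw [← Finset.mem_coe, hcoen] at h2 ⊢
        rw [mul_pow, mul_assoc]
        exact mul_mem_mu (hδpow δ hδ) h2
    · have hcond : ∀ η ∈ Tf p M e ζ n,
          (Nf p M e ζ).filter (fun ε => (ε ^ p ^ (M + e - t))⁻¹ = η * x)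
          = (Nf p M e ζ).filter (fun ε => (ε ^ p ^ (M + e - t))⁻¹ * x⁻¹ = η) := by
        intro η _
        apply Finset.filter_congr
        intro ε _
        exact hiff _ _
      rw [Finset.sum_congr rfl (fun η hη => by rw [hcond η hη]),
        Finset.sum_fiberwise_eq_sum_filter]
      apply stab_mem hp he hq hζ hnM
      · intro z hz
        rw [Finset.mem_coe, Finset.mem_filter] at hz
        exact hNsub (Finset.mem_coe.mpr hz.1)
      · intro ε hε δ hδ
        rw [Finset.mem_filter] at hε ⊢
        refine ⟨Nf_stab hp2 hζ (mu_mono (pow_dvd_pow p hnM) hδ) hε.1, ?_⟩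
        have h2 := hε.2
        rw [← Finset.mem_coe, hcoen] at h2 ⊢
        rw [mul_pow, mul_inv, mul_assoc]
        exact mul_mem_mu (inv_mem_mu (hδpow δ hδ)) h2

end AuxProof

/-- For every `x ∈ μ_{N/q}` and every `0 ≤ n ≤ M`, one has
`Σ_{η ∈ U(n)} θ̃(ηx) ∈ A(n+1)`. -/
theorem sum_thetaT_mem_Apart (p M : ℕ) (hp : p = 2 ∨ p = 3) (ζ : ℂ)
    (hζ : IsPrimitiveRoot ζ ((6 - p) * p ^ M)) :
    ∀ x ∈ mu (p ^ M), ∀ n : ℕ, n ≤ M →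
      (∑ᶠ η ∈ mu (p ^ n), thetaT p M ζ (η * x)) ∈ Apart p M ζ (n + 1) := by
  rcases hp with rfl | rfl
  · have h4 : (6 - 2) * 2 ^ M = 2 ^ (M + 2) := by
      rw [pow_add]
      norm_num [mul_comm]
    rw [h4] at hζ
    exact main_aux 2 M 2 ζ Nat.prime_two (by norm_num) (by norm_num) hζ
  · have h3 : (6 - 3) * 3 ^ M = 3 ^ (M + 1) := by
      rw [pow_add]
      norm_num [mul_comm]
    rw [h3] at hζ
    exact main_aux 3 M 1 ζ Nat.prime_three (by norm_num) (by norm_num) hζ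


end CycloMZV
end
end

section
/- Let J = (n_1,m_1,…,n_{d−1},m_{d−1},n_d,l) ∈ ℤ_{≥0}^{2d}. Then S(V_J) ⊆ V_{(n_1,m_1,…,n_{d−1},m_{d−1},n_d,l+1)}. -/
open scoped Classical BigOperators

noncomputable section

namespace CycloMZV

variable (p M : ℕ) (ζ : ℂ)

/-- `G = Gal(ℚ(ζ_N)/ℚ(ζ_q))`, identified with `{a ∈ (ℤ/Nℤ)ˣ : a ≡ 1 (mod q)}`. -/
def Gal : Subgroup (ZMod ((6 - p) * p ^ M))ˣ :=
  (Units.map (ZMod.castHom (show (6 - p) ∣ (6 - p) * p ^ M from ⟨p ^ M, rfl⟩)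
    (ZMod (6 - p))).toMonoidHom).ker

/-- The Galois action of `a ∈ (ℤ/Nℤ)ˣ` on roots of unity: `x ↦ x^a`. -/
def gact (σ : (ZMod ((6 - p) * p ^ M))ˣ) (x : ℂ) : ℂ :=
  x ^ ((σ : ZMod ((6 - p) * p ^ M)).val)

/-- Diagonal Galois action on index tuples. -/
def actTup {d : ℕ} (σ : (ZMod ((6 - p) * p ^ M))ˣ) (a : Fin d → Idx) : Fin d → Idx :=
  fun j => (gact p M σ ((a j).1), (a j).2)

/-- Diagonal Galois action of `σ ∈ G` on `𝒲^{⊗d}`. -/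
def actW (d : ℕ) (σ : Gal p M) : Module.End (ZMod p) (Wt p d) :=
  Finsupp.lmapDomain (ZMod p) (ZMod p) (actTup p M (σ : (ZMod ((6 - p) * p ^ M))ˣ))

/-- The group algebra `𝔽_p[G]`. -/
abbrev GA (p M : ℕ) := MonoidAlgebra (ZMod p) (Gal p M)

/-- Action of a group-algebra element `g ∈ 𝔽_p[G]` on `𝒲^{⊗d}`. -/
def actA (d : ℕ) (g : GA p M) : Module.End (ZMod p) (Wt p d) :=
  Finsupp.sum g.coeff (fun σ c => c • actW p M d σ)

/-- The augmentation ideal `I_G ⊆ 𝔽_p[G]`. -/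
def IG : Ideal (GA p M) :=
  RingHom.ker (MonoidAlgebra.lift (ZMod p) (ZMod p) (Gal p M) 1).toRingHom

end CycloMZV
namespace CycloMZV

variable (p M : ℕ) (ζ : ℂ)

/-- `n_{i+1}` (0-based `i`): the entry of `J` at position `2i`. -/
def Jn (d : ℕ) (J : Fin (2 * d) → ℕ) (i : ℕ) : ℕ :=
  if h : 2 * i < 2 * d then J ⟨2 * i, h⟩ else 0

/-- `m_{i+1}` (0-based `i`): the entry of `J` at position `2i+1`. -/
def Jm (d : ℕ) (J : Fin (2 * d) → ℕ) (i : ℕ) : ℕ :=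
  if h : 2 * i + 1 < 2 * d then J ⟨2 * i + 1, h⟩ else 0

/-- `l`: the last entry of `J`. -/
def Jl (d : ℕ) (J : Fin (2 * d) → ℕ) : ℕ :=
  if h : 2 * d - 1 < 2 * d then J ⟨2 * d - 1, h⟩ else 0

/-- the product `σ_1 ⋯ σ_{min(j+1,d-1)}` (0-based slot `j`). -/
def prodUpTo (d : ℕ) (σ : Fin (d - 1) → Gal p M) (j : ℕ) : Gal p M :=
  ∏ i ∈ Finset.range (min (j + 1) (d - 1)),
    (if h : i < d - 1 then σ ⟨i, h⟩ else 1)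

/-- `Φ_{σ_1,…,σ_{d-1}}` on index tuples. -/
def PhiTup (d : ℕ) (σ : Fin (d - 1) → Gal p M) (a : Fin d → Idx) : Fin d → Idx :=
  fun j => (gact p M ((prodUpTo p M d σ (j : ℕ) : (ZMod ((6 - p) * p ^ M))ˣ)) ((a j).1), (a j).2)

/-- The automorphism `Φ_{σ_1,…,σ_{d-1}}` of `𝒲^{⊗d}`. -/
def PhiS (d : ℕ) (σ : Fin (d - 1) → Gal p M) : Module.End (ZMod p) (Wt p d) :=
  Finsupp.lmapDomain (ZMod p) (ZMod p) (PhiTup p M d σ)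

/-- The multilinear extension `Φ_{g_1,…,g_{d-1}}` for `g_1,…,g_{d-1} ∈ 𝔽_p[G]`. -/
def Phi (d : ℕ) (g : Fin (d - 1) → GA p M) : Module.End (ZMod p) (Wt p d) :=
  ∑ᶠ σ : Fin (d - 1) → Gal p M,
    (∏ i, ((g i).coeff : Gal p M →₀ ZMod p) (σ i)) • PhiS p M d σ

/-- The subspace `V_J ⊆ 𝒲^{⊗d}` for `J = (n_1,m_1,…,n_{d-1},m_{d-1},n_d,l)`. -/
def VJ (d : ℕ) (J : Fin (2 * d) → ℕ) : Submodule (ZMod p) (Wt p d) :=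
  if ∀ i : ℕ, i < d → Jn d J i ≤ M then
    Submodule.span (ZMod p)
      {w : Wt p d | ∃ g : Fin (d - 1) → GA p M,
        (∀ i : Fin (d - 1), g i ∈ IG p M ^ Jm d J (i : ℕ)) ∧
        ∃ ε : Fin d → ℂ, (∀ i, ε i ∈ nu p ζ) ∧
        ∃ lv : Fin d → ℕ, (∀ h : 0 < d, Jl d J ≤ lv ⟨d - 1, by omega⟩) ∧
          w = Phi p M d g
            (∑ᶠ η ∈ {η : Fin d → ℂ | ∀ i : Fin d, η i ∈ mu (p ^ Jn d J (i : ℕ))},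
              Finsupp.single (fun i => ((η i * ε i, lv i) : Idx)) (1 : ZMod p))}
  else ⊥

/-- lexicographic (strict) order on tuples. -/
def lexLt {n : ℕ} (J J' : Fin n → ℕ) : Prop :=
  ∃ j : Fin n, (∀ i : Fin n, (i : ℕ) < (j : ℕ) → J i = J' i) ∧ J j < J' j

/-- The set `𝒥`: `n_i ≤ n_{i+1}`, and `n_i = n_{i+1} → m_i = 0`, for `1 ≤ i ≤ d-1`. -/
def goodJ (d : ℕ) (J : Fin (2 * d) → ℕ) : Prop :=
  (∀ i : ℕ, i + 1 < d → Jn d J i ≤ Jn d J (i + 1)) ∧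
  (∀ i : ℕ, i + 1 < d → Jn d J i = Jn d J (i + 1) → Jm d J i = 0)

end CycloMZV

/-!
`S` only touches the last two `l`-entries of a basis tensor, so it commutes with every map
that acts on the roots `ε_i` alone and leaves the `l_i` in place. Both the twists
`ε_i ↦ η_i ε_i` summed over in `V_J` and the Galois maps `Φ_σ` are of this kind, so `S` sends a
generator `Φ_g(Σ_η ⟦η ε; l⟧)` of `V_J` to a combination of generators of the same shape in which
`l_d` has been replaced by some `r ≥ l_d + 1 ≥ l + 1`.
-/

namespace CycloMZV

theorem _root_.Commute.finsum_right {ι R : Type*} [Semiring R] (a : R) (f : ι → R)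
    (h : ∀ i, Commute a (f i)) : Commute a (∑ᶠ i, f i) := by
  classical
  rw [finsum_def]
  split_ifs
  · exact Commute.sum_right _ _ _ fun i _ => h i
  · exact Commute.zero_right a

theorem mu_finite {n : ℕ} (hn : n ≠ 0) : (mu n).Finite :=
  (Polynomial.nthRoots n (1 : ℂ)).toFinset.finite_toSet.subset fun x (hx : x ^ n = 1) => by
    simpa [Polynomial.mem_nthRoots (Nat.pos_of_ne_zero hn)] using hx

section MapRoots

variable {d : ℕ}

def mapRoots (φ : Fin d → ℂ → ℂ) (a : Fin d → Idx) : Fin d → Idx :=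
  fun i => (φ i (a i).1, (a i).2)

variable (φ : Fin d → ℂ → ℂ) (a : Fin d → Idx)

theorem llast_mapRoots : llast (mapRoots φ a) = llast a := by
  unfold llast; split <;> rfl

theorem lprev_mapRoots : lprev (mapRoots φ a) = lprev a := by
  unfold lprev; split <;> rfl

theorem mapRoots_updEnd (s r : ℕ) : mapRoots φ (updEnd a s r) = updEnd (mapRoots φ a) s r := by
  funext j
  simp only [mapRoots, updEnd]
  split_ifs <;> rfl

theorem updEnd_fst (s r : ℕ) (j : Fin d) : (updEnd a s r j).1 = (a j).1 := by
  simp only [updEnd]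
  split_ifs <;> rfl

theorem llast_updEnd (hd : 1 ≤ d) (s r : ℕ) : llast (updEnd a s r) = r := by
  simp [llast, updEnd, hd, Nat.sub_add_cancel hd]

variable (p : ℕ)

theorem Sbase_mapRoots :
    Sbase p d (mapRoots φ a) = Finsupp.mapDomain (mapRoots φ) (Sbase p d a) := by
  simp only [Sbase, llast_mapRoots, lprev_mapRoots, Finsupp.mapDomain_finsetSum,
    Finsupp.mapDomain_smul, Finsupp.mapDomain_single, mapRoots_updEnd]

theorem Sop_mapDomain_mapRoots (x : Wt p d) :
    Sop p d (Finsupp.mapDomain (mapRoots φ) x) = Finsupp.mapDomain (mapRoots φ) (Sop p d x) := by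
  change (Sop p d ∘ₗ Finsupp.lmapDomain (ZMod p) (ZMod p) (mapRoots φ)) x =
    (Finsupp.lmapDomain (ZMod p) (ZMod p) (mapRoots φ) ∘ₗ Sop p d) x
  congr 1
  refine Finsupp.lhom_ext fun b c => ?_
  simp [Sop, Finsupp.mapDomain_single, Sbase_mapRoots]

end MapRoots

section Galois

variable (p M : ℕ) {d : ℕ}

theorem commute_Sop_PhiS (σ : Fin (d - 1) → Gal p M) : Commute (Sop p d) (PhiS p M d σ) :=
  LinearMap.ext fun x =>
    Sop_mapDomain_mapRoots (fun j => gact p M (prodUpTo p M d σ j : (ZMod ((6 - p) * p ^ M))ˣ)) p x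

theorem Sop_Phi (g : Fin (d - 1) → GA p M) (x : Wt p d) :
    Sop p d (Phi p M d g x) = Phi p M d g (Sop p d x) :=
  LinearMap.congr_fun
    (Commute.finsum_right _ _ fun σ => (commute_Sop_PhiS p M σ).smul_right _).eq x

end Galois

section RootSum

variable (p : ℕ) {d : ℕ}

/-- `Σ_{η ∈ E} ⟦η_1 ε_1, …, η_d ε_d; l_1, …, l_d⟧` for `a = (ε_i, l_i)_i`. -/
def rootSum (E : Set (Fin d → ℂ)) (a : Fin d → Idx) : Wt p d :=
  ∑ᶠ η ∈ E, Finsupp.single (mapRoots (fun i x => η i * x) a) 1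

theorem Sop_rootSum {E : Set (Fin d → ℂ)} (hE : E.Finite) (a : Fin d → Idx) :
    Sop p d (rootSum p E a) =
      ∑ r ∈ Finset.Icc (llast a + 1) (lprev a + llast a),
        ((-1 : ZMod p) ^ (r - llast a) * (r.choose (llast a) : ZMod p)) •
          rootSum p E (updEnd a (lprev a + llast a - r) r) := by
  simp only [rootSum, finsum_mem_eq_finite_toFinset_sum _ hE, Finset.smul_sum, map_sum]
  rw [Finset.sum_comm]
  refine Finset.sum_congr rfl fun η _ => ?_
  rw [← Finsupp.mapDomain_single, Sop_mapDomain_mapRoots, Sop,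
    Finsupp.linearCombination_single, one_smul, ← Sbase_mapRoots]
  simp only [Sbase, llast_mapRoots, lprev_mapRoots, mapRoots_updEnd]

end RootSum

section Indices

variable {d : ℕ} (J : Fin (2 * d) → ℕ)

def incrLast : Fin (2 * d) → ℕ := fun k => if (k : ℕ) = 2 * d - 1 then J k + 1 else J k

theorem incrLast_of_ne {k : Fin (2 * d)} (hk : (k : ℕ) ≠ 2 * d - 1) : incrLast J k = J k :=
  if_neg hk

theorem Jn_incrLast : Jn d (incrLast J) = Jn d J := by
  funext i
  unfold Jn
  split
  · exact incrLast_of_ne J (show 2 * i ≠ 2 * d - 1 by omega)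
  · rfl

theorem Jm_incrLast {i : ℕ} (hi : i + 1 < d) : Jm d (incrLast J) i = Jm d J i := by
  unfold Jm
  split
  · exact incrLast_of_ne J (show 2 * i + 1 ≠ 2 * d - 1 by omega)
  · rfl

theorem Jl_incrLast (hd : 1 ≤ d) : Jl d (incrLast J) = Jl d J + 1 := by
  unfold Jl
  split
  · exact if_pos rfl
  · omega

end Indices

section Generators

variable (p M : ℕ) (ζ : ℂ) {d : ℕ} {J : Fin (2 * d) → ℕ} {g : Fin (d - 1) → GA p M}
  {a : Fin d → Idx}

theorem Phi_rootSum_mem_VJ (hd : 1 ≤ d) (hn : ∀ i < d, Jn d J i ≤ M)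
    (hg : ∀ i : Fin (d - 1), g i ∈ IG p M ^ Jm d J i) (ha : ∀ i, (a i).1 ∈ nu p ζ)
    (hl : Jl d J ≤ llast a) :
    Phi p M d g (rootSum p {η | ∀ i : Fin d, η i ∈ mu (p ^ Jn d J i)} a) ∈ VJ p M ζ d J := by
  rw [VJ, if_pos hn]
  refine Submodule.subset_span ⟨g, hg, fun i => (a i).1, ha, fun i => (a i).2, fun _ => ?_, rfl⟩
  simpa [llast, hd] using hl

theorem Sop_Phi_rootSum_mem_VJ (hp : p ≠ 0) (hd : 1 ≤ d) (hn : ∀ i < d, Jn d J i ≤ M)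
    (hg : ∀ i : Fin (d - 1), g i ∈ IG p M ^ Jm d J i) (ha : ∀ i, (a i).1 ∈ nu p ζ)
    (hl : Jl d J ≤ llast a) :
    Sop p d (Phi p M d g (rootSum p {η | ∀ i : Fin d, η i ∈ mu (p ^ Jn d J i)} a)) ∈
      VJ p M ζ d (incrLast J) := by
  have hE : {η : Fin d → ℂ | ∀ i : Fin d, η i ∈ mu (p ^ Jn d J i)}.Finite :=
    Set.Finite.pi' fun _ => mu_finite (pow_ne_zero _ hp)
  rw [Sop_Phi, Sop_rootSum p hE, map_sum]
  refine sum_mem fun r hr => ?_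
  rw [map_smul, ← Jn_incrLast J]
  refine Submodule.smul_mem _ _ (Phi_rootSum_mem_VJ p M ζ hd
    (by simpa only [Jn_incrLast] using hn)
    (fun i => by simpa only [Jm_incrLast J (by omega : (i : ℕ) + 1 < d)] using hg i)
    (fun i => by simpa only [updEnd_fst] using ha i) ?_)
  rw [llast_updEnd _ hd, Jl_incrLast J hd]
  have := (Finset.mem_Icc.mp hr).1
  omega

end Generators

theorem Sop_VJ_subset_general (p M : ℕ) (hp : p = 2 ∨ p = 3) (ζ : ℂ)
    (d : ℕ) (hd : 2 ≤ d)
    (J : Fin (2 * d) → ℕ) :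
    ∀ u ∈ VJ p M ζ d J,
      Sop p d u ∈ VJ p M ζ d (fun k => if (k : ℕ) = 2 * d - 1 then J k + 1 else J k) := by
  intro u hu
  change Sop p d u ∈ VJ p M ζ d (incrLast J)
  by_cases hn : ∀ i < d, Jn d J i ≤ M
  swap
  · rw [VJ, if_neg hn, Submodule.mem_bot] at hu
    rw [hu, map_zero]
    exact zero_mem _
  rw [VJ, if_pos hn] at hu
  induction hu using Submodule.span_induction with
  | mem w hw =>
    obtain ⟨g, hg, ε, hε, lv, hlv, rfl⟩ := hw
    exact Sop_Phi_rootSum_mem_VJ p M ζ (a := fun i => (ε i, lv i)) (by omega) (by omega) hn hg hε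
      (by simpa [llast, show 1 ≤ d by omega] using hlv (by omega))
  | zero => rw [map_zero]; exact zero_mem _
  | add x y _ _ hx hy => rw [map_add]; exact add_mem hx hy
  | smul c x _ hx => rw [map_smul]; exact Submodule.smul_mem _ c hx

/-- Let `J = (n_1,m_1,…,n_{d−1},m_{d−1},n_d,l)`. Then
`S(V_J) ⊆ V_{(n_1,m_1,…,n_{d−1},m_{d−1},n_d,l+1)}`. -/
theorem Sop_VJ_subset (p M : ℕ) (hp : p = 2 ∨ p = 3) (ζ : ℂ)
    (hζ : IsPrimitiveRoot ζ ((6 - p) * p ^ M)) (d : ℕ) (hd : 2 ≤ d)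
    (J : Fin (2 * d) → ℕ) :
    ∀ u ∈ VJ p M ζ d J,
      Sop p d u ∈ VJ p M ζ d (fun k => if (k : ℕ) = 2 * d - 1 then J k + 1 else J k) :=
  Sop_VJ_subset_general p M hp ζ d hd J

end CycloMZV
end
end

section
/- Let p and q be distinct prime numbers and N = pq. For every x ∈ ℤ/pℤ, one has f_N(x) + f_N(−x) ∈ ker β. -/
open scoped Classical BigOperators TensorProduct

noncomputable section

namespace KappaWeightTwo

/-- The group algebra `ℚ[𝔽_N]`, with basis `[x]`, `x ∈ 𝔽_N = ℤ/Nℤ`. -/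
abbrev F (N : ℕ) := ZMod N →₀ ℚ

/-- The basis vector `[x]`. -/
def bvec (N : ℕ) (x : ZMod N) : F N := Finsupp.single x 1

/-- The bilinear map underlying `β`:
`([x], [y]) ↦ [x+y]⊗[y] − [y]⊗[x+y] + [y]⊗[x]`. -/
def betaBil (N : ℕ) : F N →ₗ[ℚ] F N →ₗ[ℚ] (F N ⊗[ℚ] F N) :=
  Finsupp.linearCombination ℚ fun x : ZMod N =>
    Finsupp.linearCombination ℚ fun y : ZMod N =>
      bvec N (x + y) ⊗ₜ[ℚ] bvec N y - bvec N y ⊗ₜ[ℚ] bvec N (x + y)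
        + bvec N y ⊗ₜ[ℚ] bvec N x

/-- The map `β : ℚ[𝔽_N]⊗ℚ[𝔽_N] → ℚ[𝔽_N]⊗ℚ[𝔽_N]`,
`β([x]⊗[y]) = [x+y]⊗[y] − [y]⊗[x+y] + [y]⊗[x]`. -/
def beta (N : ℕ) : (F N ⊗[ℚ] F N) →ₗ[ℚ] (F N ⊗[ℚ] F N) :=
  TensorProduct.lift (betaBil N)

/-- The subspace `Λ_N ⊆ ℚ[𝔽_N]`, cut out by the linear conditions `c_0 = 0`,
`c_i = c_{−i}`, `c_{mq} = Σ_{i=0}^{q−1} c_{m+ip}` for `m = 1,…,p−1`, and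
`c_{np} = Σ_{i=0}^{p−1} c_{n+iq}` for `n = 1,…,q−1`. -/
def lam (N p q : ℕ) : Submodule ℚ (F N) :=
  LinearMap.ker (Finsupp.lapply (0 : ZMod N) : F N →ₗ[ℚ] ℚ) ⊓
  (⨅ i : ZMod N,
    LinearMap.ker ((Finsupp.lapply i : F N →ₗ[ℚ] ℚ) - Finsupp.lapply (-i))) ⊓
  (⨅ m ∈ Finset.Icc 1 (p - 1),
    LinearMap.ker ((Finsupp.lapply ((m * q : ℕ) : ZMod N) : F N →ₗ[ℚ] ℚ)
      - ∑ i ∈ Finset.range q, Finsupp.lapply ((m + i * p : ℕ) : ZMod N))) ⊓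
  (⨅ n ∈ Finset.Icc 1 (q - 1),
    LinearMap.ker ((Finsupp.lapply ((n * p : ℕ) : ZMod N) : F N →ₗ[ℚ] ℚ)
      - ∑ i ∈ Finset.range p, Finsupp.lapply ((n + i * q : ℕ) : ZMod N)))

/-- `H_{p,q} ⊆ (ℤ/pℤ)ˣ`: the subgroup generated by the images of `q` and `−1`. -/
def Hpq (p q : ℕ) : Subgroup (ZMod p)ˣ :=
  Subgroup.closure {u : (ZMod p)ˣ | ((u : ZMod p) = (q : ZMod p)) ∨ ((u : ZMod p) = -1)}

/-- `n_q(p)`: the index of `H_{p,q}` in `(ℤ/pℤ)ˣ`. -/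
def nqp (p q : ℕ) : ℕ := (Hpq p q).index

/-- `q·z ∈ 𝔽_N` for `z ∈ ℤ/pℤ` (`q` times any integer lift of `z`). -/
def ql (p q N : ℕ) (z : ZMod p) : ZMod N := (q : ZMod N) * ((z.val : ℕ) : ZMod N)

/-- `f_N(x) = Σ_{y ∈ (ℤ/pℤ)ˣ} ([qx]⊗[qy] − [qy]⊗[qx])`. -/
def fN (p q : ℕ) (x : ZMod p) : F (p * q) ⊗[ℚ] F (p * q) :=
  ∑ᶠ y : (ZMod p)ˣ,
    (bvec (p * q) (ql p q (p * q) x) ⊗ₜ[ℚ] bvec (p * q) (ql p q (p * q) ((y : ZMod p)))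
      - bvec (p * q) (ql p q (p * q) ((y : ZMod p))) ⊗ₜ[ℚ] bvec (p * q) (ql p q (p * q) x))

end KappaWeightTwo
namespace KappaWeightTwo

lemma ql_add (p q : ℕ) [NeZero p] (u v : ZMod p) :
    ql p q (p * q) (u + v) = ql p q (p * q) u + ql p q (p * q) v := by
  unfold ql
  have h0 : ((p : ZMod (p * q)) * q) = 0 := by
    rw [← Nat.cast_mul, ZMod.natCast_self]
  have hval : (((u + v).val : ℕ) : ZMod (p * q)) +
      (p : ZMod (p * q)) * (((u.val + v.val) / p : ℕ) : ZMod (p * q)) =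
      ((u.val : ℕ) : ZMod (p * q)) + ((v.val : ℕ) : ZMod (p * q)) := by
    have : ((u + v).val : ℕ) + p * ((u.val + v.val) / p) = u.val + v.val := by
      rw [ZMod.val_add, Nat.mod_add_div]
    calc (((u + v).val : ℕ) : ZMod (p * q)) + (p : ZMod (p*q)) * (((u.val + v.val) / p : ℕ))
        = ((((u + v).val : ℕ) + p * ((u.val + v.val) / p) : ℕ) : ZMod (p*q)) := by
          push_cast; ring
      _ = _ := by rw [this]; push_cast; ring
  linear_combination (q : ZMod (p * q)) * hval - (((u.val + v.val) / p : ℕ) : ZMod (p * q)) * h0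

lemma beta_apply (N : ℕ) (a b : ZMod N) :
    beta N (bvec N a ⊗ₜ[ℚ] bvec N b) =
      bvec N (a + b) ⊗ₜ[ℚ] bvec N b - bvec N b ⊗ₜ[ℚ] bvec N (a + b)
        + bvec N b ⊗ₜ[ℚ] bvec N a := by
  simp [beta, betaBil, bvec, TensorProduct.lift.tmul, Finsupp.linearCombination_single]

lemma sum_units_eq {p : ℕ} [Fact p.Prime] {M : Type*} [AddCommMonoid M]
    (g : ZMod p → M) (hg : g 0 = 0) :
    ∑ y : (ZMod p)ˣ, g (y : ZMod p) = ∑ y : ZMod p, g y := by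
  classical
  calc ∑ y : (ZMod p)ˣ, g (y : ZMod p)
      = ∑ y : {y : ZMod p // y ≠ 0}, g (y : ZMod p) :=
        Fintype.sum_equiv unitsEquivNeZero _ _ (fun u => rfl)
    _ = ∑ y ∈ Finset.univ.filter (fun y : ZMod p => y ≠ 0), g y :=
        (Finset.sum_subtype _ (by simp) g).symm
    _ = ∑ y : ZMod p, g y :=
        Finset.sum_filter_of_ne (by intro x _ hx h0; exact hx (h0 ▸ hg))


/-- Let `p ≠ q` be primes and `N = pq`. For every `x ∈ ℤ/pℤ`,
`f_N(x) + f_N(−x) ∈ ker β`. -/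
theorem fN_add_fN_neg_mem_ker (p q : ℕ) (hp : p.Prime) (hq : q.Prime) (hne : p ≠ q)
    (x : ZMod p) :
    fN p q x + fN p q (-x) ∈ LinearMap.ker (beta (p * q)) := by
  haveI : Fact p.Prime := ⟨hp⟩
  haveI : Fact q.Prime := ⟨hq⟩
  classical
  set N := p * q with hN
  set c : ZMod p → ZMod N := ql p q N with hc
  have hql : ∀ u v : ZMod p, c (u + v) = c u + c v := ql_add p q
  rw [LinearMap.mem_ker, map_add]
  have hf : ∀ z : ZMod p, beta N (fN p q z) =
      (∑ y : ZMod p, bvec N (c (z + y)) ⊗ₜ[ℚ] bvec N (c y))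
        - ∑ y : ZMod p, bvec N (c y) ⊗ₜ[ℚ] bvec N (c (z + y)) := by
    intro z
    set G : ZMod p → F N ⊗[ℚ] F N := fun y =>
      bvec N (c (z + y)) ⊗ₜ[ℚ] bvec N (c y) - bvec N (c y) ⊗ₜ[ℚ] bvec N (c (z + y))
        + bvec N (c y) ⊗ₜ[ℚ] bvec N (c z)
      - (bvec N (c (z + y)) ⊗ₜ[ℚ] bvec N (c z) - bvec N (c z) ⊗ₜ[ℚ] bvec N (c (z + y))
          + bvec N (c z) ⊗ₜ[ℚ] bvec N (c y)) with hG
    have hterm : ∀ y : (ZMod p)ˣ,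
        beta N (bvec N (c z) ⊗ₜ[ℚ] bvec N (c (y : ZMod p))
          - bvec N (c (y : ZMod p)) ⊗ₜ[ℚ] bvec N (c z)) = G (y : ZMod p) := by
      intro y
      rw [map_sub, beta_apply, beta_apply,
        show c (y : ZMod p) + c z = c (z + (y : ZMod p)) by rw [add_comm z, hql],
        show c z + c (y : ZMod p) = c (z + (y : ZMod p)) from (hql z _).symm, hG]
    calc beta N (fN p q z)
        = ∑ y : (ZMod p)ˣ, beta N (bvec N (c z) ⊗ₜ[ℚ] bvec N (c (y : ZMod p))
            - bvec N (c (y : ZMod p)) ⊗ₜ[ℚ] bvec N (c z)) := by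
          rw [fN, finsum_eq_sum_of_fintype, map_sum]
      _ = ∑ y : (ZMod p)ˣ, G (y : ZMod p) := by
          exact Finset.sum_congr rfl fun y _ => hterm y
      _ = ∑ y : ZMod p, G y := sum_units_eq G (by
            simp only [hG, add_zero]
            rw [sub_add_cancel, sub_self, zero_add, sub_self])
      _ = _ := by
          simp only [hG]
          simp only [Finset.sum_sub_distrib, Finset.sum_add_distrib]
          have e1 : ∑ y : ZMod p, bvec N (c (z + y)) ⊗ₜ[ℚ] bvec N (c z)
              = ∑ y : ZMod p, bvec N (c y) ⊗ₜ[ℚ] bvec N (c z) :=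
            Fintype.sum_equiv (Equiv.addLeft z) _ _ (fun a => by
              simp [Equiv.coe_addLeft])
          have e2 : ∑ y : ZMod p, bvec N (c z) ⊗ₜ[ℚ] bvec N (c (z + y))
              = ∑ y : ZMod p, bvec N (c z) ⊗ₜ[ℚ] bvec N (c y) :=
            Fintype.sum_equiv (Equiv.addLeft z) _ _ (fun a => by
              simp [Equiv.coe_addLeft])
          rw [e1, e2, sub_add_cancel, add_sub_cancel_right]
  rw [hf x, hf (-x)]
  have h1 : ∑ y : ZMod p, bvec N (c y) ⊗ₜ[ℚ] bvec N (c (x + y))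
      = ∑ y : ZMod p, bvec N (c (-x + y)) ⊗ₜ[ℚ] bvec N (c y) :=
    Fintype.sum_equiv (Equiv.addLeft x) _ _ (fun a => by
      simp [Equiv.coe_addLeft, neg_add_cancel_left])
  have h2 : ∑ y : ZMod p, bvec N (c (x + y)) ⊗ₜ[ℚ] bvec N (c y)
      = ∑ y : ZMod p, bvec N (c y) ⊗ₜ[ℚ] bvec N (c (-x + y)) :=
    Fintype.sum_equiv (Equiv.addLeft x) _ _ (fun a => by
      simp [Equiv.coe_addLeft, neg_add_cancel_left])
  rw [h1, h2, sub_add_sub_cancel', sub_self]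


end KappaWeightTwo
end
end
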